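/- arXiv:1801.08876 — 2 statements merged into one kernel-verified Lean document; each statement's English description precedes it below -/
import Mathlib

section
/- Let G be a finite graph in which every vertex has degree 1, 3 or 4, and let G' be the induced subgraph of G on the set of vertices of degree 1 or 4. Then E(G) can be partitioned into two (possibly empty) parts E₁ and E₂ such that E₁ is a 1-regular part and E₂ is a 3-regular part if and only if G' has a perfect matching, i.e., a set M of edges of G' such that every vertex of G' is incident to exactly one edge of M. -/
/-!
Degrees add over a disjoint union of parts. If `E(G) = E₁ ⊔ E₂` with `E₁` 1-regular and `E₂`
3-regular, every vertex has degree `d₁ + d₂` with `d₁ ∈ {0, 1}` and `d₂ ∈ {0, 3}`, so `d₁ = 1`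
exactly at the vertices of degree 1 or 4: `E₁` is a perfect matching of `G'`. Conversely, removing
a perfect matching `F` of `G'` from `E(G)` leaves degree `4 - 1 = 3` or `3 - 0 = 3` at each vertex
it still touches, while a vertex of degree 1 loses its only edge.
-/

open SimpleGraph

variable {V : Type*}

/-- The degree of a vertex `v` in an edge part `E`: the number of edges of `E` incident to `v`. -/
noncomputable def partDeg (E : Set (Sym2 V)) (v : V) : ℕ :=
  {e ∈ E | v ∈ e}.ncard

/-- A part is a matching if no two of its edges share a vertex. -/
def IsMatchingPart (E : Set (Sym2 V)) : Prop :=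
  ∀ e ∈ E, ∀ f ∈ E, e ≠ f → ∀ v : V, v ∈ e → v ∉ f

/-- A part is locally irregular if the endpoints of each of its edges have distinct degrees. -/
def IsLocallyIrregularPart (E : Set (Sym2 V)) : Prop :=
  ∀ u v : V, s(u, v) ∈ E → partDeg E u ≠ partDeg E v

/-- A part is locally regular if the endpoints of each of its edges have equal degrees. -/
def IsLocallyRegularPart (E : Set (Sym2 V)) : Prop :=
  ∀ u v : V, s(u, v) ∈ E → partDeg E u = partDeg E v

/-- A part is regular if all vertices incident to one of its edges have the same degree `r ≥ 1`. -/
def IsRegularPart (E : Set (Sym2 V)) : Prop :=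
  ∃ r : ℕ, 1 ≤ r ∧ ∀ v : V, (∃ e ∈ E, v ∈ e) → partDeg E v = r

/-- A part is `r`-regular if every vertex incident to one of its edges has degree `r` in it. -/
def IsRegularPartOfDeg (r : ℕ) (E : Set (Sym2 V)) : Prop :=
  ∀ v : V, (∃ e ∈ E, v ∈ e) → partDeg E v = r

/-- A part is locally `k`-irregular if endpoint degrees of each edge differ by at least `k`. -/
def IsLocallyKIrregularPart (k : ℕ) (E : Set (Sym2 V)) : Prop :=
  ∀ u v : V, s(u, v) ∈ E → (k : ℤ) ≤ |(partDeg E u : ℤ) - (partDeg E v : ℤ)|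

/-- The maximum degree of a finite graph. -/
noncomputable def maxDeg [Fintype V] (G : SimpleGraph V) : ℕ :=
  Finset.univ.sup fun v => partDeg G.edgeSet v

section PartDeg

variable {E F : Set (Sym2 V)} {v : V}

lemma partDeg_eq_zero_iff [Finite V] : partDeg E v = 0 ↔ ¬∃ e ∈ E, v ∈ e := by
  rw [partDeg, Set.ncard_eq_zero (Set.toFinite _), Set.eq_empty_iff_forall_notMem]
  simp

lemma partDeg_union [Finite V] (h : Disjoint E F) :
    partDeg (E ∪ F) v = partDeg E v + partDeg F v := by
  rw [partDeg, show {e ∈ E ∪ F | v ∈ e} = {e ∈ E | v ∈ e} ∪ {e ∈ F | v ∈ e} from Set.sep_union]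
  exact Set.ncard_union_eq (h.mono (Set.sep_subset _ _) (Set.sep_subset _ _))

lemma partDeg_add_partDeg_diff [Finite V] (hFE : F ⊆ E) :
    partDeg F v + partDeg (E \ F) v = partDeg E v := by
  rw [← partDeg_union Set.disjoint_sdiff_right, Set.union_sdiff_cancel hFE]

lemma IsRegularPartOfDeg.partDeg_eq_zero_or_eq [Finite V] {r : ℕ}
    (h : IsRegularPartOfDeg r E) (v : V) : partDeg E v = 0 ∨ partDeg E v = r := by
  by_cases hv : ∃ e ∈ E, v ∈ e
  · exact Or.inr (h v hv)
  · exact Or.inl (partDeg_eq_zero_iff.2 hv)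

end PartDeg

variable [Finite V] {E F : Set (Sym2 V)}

lemma perfectMatching_induce_iff (P : V → Prop) :
    (F ⊆ {e ∈ E | ∀ v, v ∈ e → P v} ∧ ∀ v, P v → partDeg F v = 1) ↔
      F ⊆ E ∧ IsRegularPartOfDeg 1 F ∧ ∀ v, partDeg F v = 1 ↔ P v := by
  constructor
  · rintro ⟨hFsub, hF⟩
    have hP : ∀ v, (∃ e ∈ F, v ∈ e) → P v := fun v ⟨e, he, hv⟩ => (hFsub he).2 v hv
    refine ⟨fun e he => (hFsub he).1, fun v hv => hF v (hP v hv), fun v => ⟨fun h1 => ?_, hF v⟩⟩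
    exact hP v (not_not.1 (partDeg_eq_zero_iff.not.1 (by omega)))
  · rintro ⟨hFE, hreg, hiff⟩
    exact ⟨fun e he => ⟨hFE he, fun v hv => (hiff v).1 (hreg v ⟨e, he, hv⟩)⟩,
      fun v => (hiff v).2⟩

lemma isRegularPartOfDeg_three_diff_iff (hFE : F ⊆ E) (hF : IsRegularPartOfDeg 1 F)
    (hE : ∀ v, partDeg E v ∈ ({1, 3, 4} : Set ℕ)) :
    IsRegularPartOfDeg 3 (E \ F) ↔
      ∀ v, partDeg F v = 1 ↔ partDeg E v = 1 ∨ partDeg E v = 4 := by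
  constructor
  · intro h3 v
    have hsum := partDeg_add_partDeg_diff (v := v) hFE
    rcases hF.partDeg_eq_zero_or_eq v with h | h <;>
      rcases h3.partDeg_eq_zero_or_eq v with h' | h' <;> omega
  · intro hiff v hv
    have hsum := partDeg_add_partDeg_diff (v := v) hFE
    have hpos : partDeg (E \ F) v ≠ 0 := partDeg_eq_zero_iff.not.2 (not_not.2 hv)
    have hEv : partDeg E v = 1 ∨ partDeg E v = 3 ∨ partDeg E v = 4 := hE v
    have := hiff v
    rcases hF.partDeg_eq_zero_or_eq v with h | h <;> omega

/-- for a finite graph all of whose vertex degrees lie in {1, 3, 4}, with G' the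
induced subgraph on the vertices of degree 1 or 4, the edge set of G decomposes into a
1-regular part and a 3-regular part iff G' has a perfect matching. -/
theorem stmt_11 {V : Type*} [Fintype V] (G : SimpleGraph V)
    (hdeg : ∀ v : V, partDeg G.edgeSet v ∈ ({1, 3, 4} : Set ℕ)) :
    (∃ E₁ E₂ : Set (Sym2 V),
        E₁ ∪ E₂ = G.edgeSet ∧ Disjoint E₁ E₂ ∧
        IsRegularPartOfDeg 1 E₁ ∧ IsRegularPartOfDeg 3 E₂) ↔
      (∃ F : Set (Sym2 V),
        F ⊆ {e ∈ G.edgeSet | ∀ v : V, v ∈ e →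
              (partDeg G.edgeSet v = 1 ∨ partDeg G.edgeSet v = 4)} ∧
        ∀ v : V, (partDeg G.edgeSet v = 1 ∨ partDeg G.edgeSet v = 4) →
          partDeg F v = 1) := by
  constructor
  · rintro ⟨E₁, E₂, hunion, hdisj, h1, h3⟩
    have hE₁ : E₁ ⊆ G.edgeSet := hunion ▸ Set.subset_union_left
    obtain rfl : E₂ = G.edgeSet \ E₁ := by
      rw [← hunion, Set.union_sdiff_cancel_left (Set.disjoint_iff.1 hdisj)]
    exact ⟨E₁, (perfectMatching_induce_iff _).2
      ⟨hE₁, h1, (isRegularPartOfDeg_three_diff_iff hE₁ h1 hdeg).1 h3⟩⟩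
  · rintro ⟨F, hF⟩
    obtain ⟨hFE, h1, hiff⟩ := (perfectMatching_induce_iff _).1 hF
    exact ⟨F, G.edgeSet \ F, Set.union_sdiff_cancel hFE, Set.disjoint_sdiff_right, h1,
      (isRegularPartOfDeg_three_diff_iff hFE h1 hdeg).2 hiff⟩
end

section
/- For every integer k ≥ 4 there exists a finite graph G such that E(G) admits a partition into locally k-irregular parts, and every partition of E(G) into locally k-irregular parts has at least 4k parts; that is, h(k) ≥ 4k for k > 3. -/
open SimpleGraph

variable {V : Type*}

/-!
For `m ≤ k`, take `m` hubs, each joined to `k` legs; give every leg `k - m` pendant vertices, and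
for every pair `{s, t}` of hubs (`s = t` allowed) add a join vertex adjacent to all legs of `s`
and of `t`. Then legs have degree `k + 1`, hubs degree `k`, join vertices degree at most `2k`, and
every edge has exactly one leg as an end, so the `m k` stars at the legs are a locally
`k`-irregular decomposition.

Conversely, in a locally `k`-irregular part containing the edge from a hub to a leg, the degree
bounds force the leg to keep its whole star of `k + 1` edges. Two such legs in one part would give
their common join vertex a degree between `2` and `2k` in that part, less than `k` away from
`k + 1`. So the `m k` hub edges lie in distinct parts; `m = 4` gives the theorem.
-/

open Function

variable {W : Type*}

def IsKIrregularDecomposition (k : ℕ) (G : SimpleGraph V) {ι : Type*}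
    (P : ι → Set (Sym2 V)) : Prop :=
  (⋃ i, P i) = G.edgeSet ∧ (∀ i j, i ≠ j → Disjoint (P i) (P j)) ∧
    ∀ i, IsLocallyKIrregularPart k (P i)

lemma partDeg_image_sym2Map (f : V ↪ W) (E : Set (Sym2 V)) (v : V) :
    partDeg (f.sym2Map '' E) (f v) = partDeg E v := by
  have : {e ∈ f.sym2Map '' E | f v ∈ e} = f.sym2Map '' {e ∈ E | v ∈ e} := by
    ext e
    constructor
    · rintro ⟨⟨e, he, rfl⟩, hv⟩
      obtain ⟨x, hx, hxv⟩ := Sym2.mem_map.1 hv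
      exact ⟨e, ⟨he, f.injective hxv ▸ hx⟩, rfl⟩
    · rintro ⟨e, ⟨he, hv⟩, rfl⟩
      exact ⟨⟨e, he, rfl⟩, Sym2.mem_map.2 ⟨v, hv, rfl⟩⟩
  rw [partDeg, this, Set.ncard_image_of_injective _ f.sym2Map.injective, partDeg]

lemma IsLocallyKIrregularPart.image_sym2Map {k : ℕ} {E : Set (Sym2 V)}
    (hE : IsLocallyKIrregularPart k E) (f : V ↪ W) :
    IsLocallyKIrregularPart k (f.sym2Map '' E) := by
  have hrange : ∀ {u' v' : W}, s(u', v') ∈ f.sym2Map '' E → u' ∈ Set.range f := by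
    rintro u' v' ⟨e, -, he⟩
    obtain ⟨x, -, hx⟩ := Sym2.mem_map.1 (he ▸ Sym2.mem_mk_left u' v')
    exact ⟨x, hx⟩
  intro u' v' he
  obtain ⟨u, rfl⟩ := hrange he
  obtain ⟨v, rfl⟩ := hrange (Sym2.eq_swap ▸ he)
  have huv : s(u, v) ∈ E := f.sym2Map.injective.mem_set_image.1 he
  rw [partDeg_image_sym2Map, partDeg_image_sym2Map]
  exact hE u v huv

lemma IsKIrregularDecomposition.map {k : ℕ} {G : SimpleGraph V} {ι : Type*}
    {P : ι → Set (Sym2 V)} (hP : IsKIrregularDecomposition k G P) (f : V ↪ W) :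
    IsKIrregularDecomposition k (G.map f) fun i => f.sym2Map '' P i := by
  obtain ⟨hU, hD, hI⟩ := hP
  refine ⟨?_, fun i j hij => ?_, fun i => (hI i).image_sym2Map f⟩
  · rw [← Set.image_iUnion, hU, edgeSet_map]
  · exact (Set.disjoint_image_iff f.sym2Map.injective).2 (hD i j hij)

lemma IsKIrregularDecomposition.comp_equiv {k : ℕ} {G : SimpleGraph V} {ι ι' : Type*}
    {P : ι → Set (Sym2 V)} (hP : IsKIrregularDecomposition k G P) (σ : ι' ≃ ι) :
    IsKIrregularDecomposition k G (P ∘ σ) := by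
  obtain ⟨hU, hD, hI⟩ := hP
  exact ⟨(σ.surjective.iUnion_comp P).trans hU, fun i j hij => hD _ _ (σ.injective.ne hij),
    fun i => hI _⟩

lemma partDeg_edgeSet (G : SimpleGraph V) (v : V) :
    partDeg G.edgeSet v = (G.neighborSet v).ncard := by
  classical exact Nat.card_congr (G.incidenceSetEquivNeighborSet v)

lemma partDeg_incidenceSet_self (G : SimpleGraph V) (v : V) :
    partDeg (G.incidenceSet v) v = partDeg G.edgeSet v := by
  unfold partDeg
  congr 1
  ext e
  exact ⟨And.left, fun h => ⟨h, h.2⟩⟩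

lemma partDeg_incidenceSet_of_adj (G : SimpleGraph V) {v w : V} (h : G.Adj v w) :
    partDeg (G.incidenceSet v) w = 1 := by
  have : {e ∈ G.incidenceSet v | w ∈ e} = G.incidenceSet v ∩ G.incidenceSet w := by
    ext e
    exact ⟨fun ⟨hv, hw⟩ => ⟨hv, hv.1, hw⟩, fun ⟨hv, hw⟩ => ⟨hv, hw.2⟩⟩
  rw [partDeg, this, G.incidenceSet_inter_incidenceSet_of_adj h, Set.ncard_singleton]

theorem isKIrregularDecomposition_incidenceSet {G : SimpleGraph V} {k : ℕ} {ι : Type*}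
    (a : ι → V) (ha : Injective a) (hindep : ∀ i j, ¬ G.Adj (a i) (a j))
    (hcover : ∀ e ∈ G.edgeSet, ∃ i, a i ∈ e)
    (hdeg : ∀ i, k + 1 ≤ partDeg G.edgeSet (a i)) :
    IsKIrregularDecomposition k G fun i => G.incidenceSet (a i) := by
  refine ⟨?_, fun i j hij => ?_, fun i u v ⟨he, hmem⟩ => ?_⟩
  · refine (Set.iUnion_subset fun i => G.incidenceSet_subset _).antisymm fun e he => ?_
    obtain ⟨i, hi⟩ := hcover e he
    exact Set.mem_iUnion.2 ⟨i, he, hi⟩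
  · exact Set.disjoint_iff_inter_eq_empty.2
      (G.incidenceSet_inter_incidenceSet_of_not_adj (hindep i j) (ha.ne hij))
  · have hi := hdeg i
    rcases Sym2.mem_iff.1 hmem with rfl | rfl
    · rw [partDeg_incidenceSet_self, partDeg_incidenceSet_of_adj G he, le_abs']
      omega
    · rw [partDeg_incidenceSet_self, partDeg_incidenceSet_of_adj G he.symm, le_abs']
      omega

section Finite

variable [Finite V] {G : SimpleGraph V} {k : ℕ} {E : Set (Sym2 V)}

lemma partDeg_mono {F : Set (Sym2 V)} (h : E ⊆ F) (v : V) : partDeg E v ≤ partDeg F v :=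
  Set.ncard_le_ncard fun _ he => ⟨h he.1, he.2⟩

lemma one_le_partDeg {e : Sym2 V} {v : V} (he : e ∈ E) (hv : v ∈ e) : 1 ≤ partDeg E v :=
  (Set.ncard_pos).2 ⟨e, he, hv⟩

lemma two_le_partDeg {e f : Sym2 V} {v : V} (he : e ∈ E) (hf : f ∈ E) (hef : e ≠ f)
    (hve : v ∈ e) (hvf : v ∈ f) : 2 ≤ partDeg E v := by
  rw [← Set.ncard_pair hef]
  exact Set.ncard_le_ncard (Set.pair_subset ⟨he, hve⟩ ⟨hf, hvf⟩)

lemma incidenceSet_subset_of_partDeg_le (hE : E ⊆ G.edgeSet) {v : V}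
    (h : partDeg G.edgeSet v ≤ partDeg E v) : G.incidenceSet v ⊆ E := by
  have : {e ∈ E | v ∈ e} = G.incidenceSet v :=
    Set.eq_of_subset_of_ncard_le (fun _ he => ⟨hE he.1, he.2⟩) h
  exact this ▸ fun _ he => he.1

lemma IsLocallyKIrregularPart.partDeg_eq_succ (hirr : IsLocallyKIrregularPart k E)
    (hE : E ⊆ G.edgeSet) {b a : V} (he : s(b, a) ∈ E) (hb : partDeg G.edgeSet b ≤ k)
    (ha : partDeg G.edgeSet a ≤ k + 1) : partDeg E a = k + 1 := by
  have hb₁ := one_le_partDeg he (Sym2.mem_mk_left b a)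
  have ha₁ := one_le_partDeg he (Sym2.mem_mk_right b a)
  have hbk := (partDeg_mono hE b).trans hb
  have hak := (partDeg_mono hE a).trans ha
  rcases le_abs'.1 (hirr b a he) with hd | hd <;> omega

lemma IsLocallyKIrregularPart.eq_of_common_neighbor (hirr : IsLocallyKIrregularPart k E)
    (hE : E ⊆ G.edgeSet) {a a' c : V} (ha : partDeg E a = k + 1) (hac : s(a, c) ∈ E)
    (ha'c : s(a', c) ∈ E) (hc : partDeg G.edgeSet c ≤ 2 * k) : a = a' := by
  by_contra hne
  have hc₂ := two_le_partDeg hac ha'c (mt Sym2.congr_left.1 hne)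
    (Sym2.mem_mk_right a c) (Sym2.mem_mk_right a' c)
  have hck := (partDeg_mono hE c).trans hc
  have hd := hirr a c hac
  rw [ha] at hd
  rcases le_abs'.1 hd with hd | hd <;> omega

theorem card_le_card_of_forced_stars {κ ι : Type*} [Fintype κ] [Fintype ι]
    {P : ι → Set (Sym2 V)} (hU : (⋃ i, P i) = G.edgeSet)
    (hirr : ∀ i, IsLocallyKIrregularPart k (P i)) (hub leg : κ → V) (hleg : Injective leg)
    (hadj : ∀ j, G.Adj (hub j) (leg j)) (hhub : ∀ j, partDeg G.edgeSet (hub j) ≤ k)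
    (hlegDeg : ∀ j, partDeg G.edgeSet (leg j) = k + 1)
    (hjoin : ∀ j j', ∃ c, G.Adj (leg j) c ∧ G.Adj (leg j') c ∧
      partDeg G.edgeSet c ≤ 2 * k) :
    Fintype.card κ ≤ Fintype.card ι := by
  have hsub : ∀ i, P i ⊆ G.edgeSet := fun i => hU ▸ Set.subset_iUnion P i
  have hcover : ∀ j, ∃ i, s(hub j, leg j) ∈ P i := fun j =>
    Set.mem_iUnion.1 (hU ▸ (G.mem_edgeSet.2 (hadj j)))
  choose part hpart using hcover
  have hfull : ∀ j, partDeg (P (part j)) (leg j) = k + 1 := fun j =>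
    (hirr _).partDeg_eq_succ (hsub _) (hpart j) (hhub j) (hlegDeg j).le
  have hstar : ∀ j, G.incidenceSet (leg j) ⊆ P (part j) := fun j =>
    incidenceSet_subset_of_partDeg_le (hsub _) ((hlegDeg j).trans (hfull j).symm).le
  refine Fintype.card_le_of_injective part fun j j' hjj' => hleg ?_
  obtain ⟨c, hc, hc', hcDeg⟩ := hjoin j j'
  exact (hirr _).eq_of_common_neighbor (hsub _) (hfull j) (hstar j ⟨hc, Sym2.mem_mk_left _ _⟩)
    (hjj' ▸ hstar j' ⟨hc', Sym2.mem_mk_left _ _⟩) hcDeg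

end Finite

inductive HubVertex (m k : ℕ) : Type
  | hub : Fin m → HubVertex m k
  | leg : Fin m × Fin k → HubVertex m k
  | join : Sym2 (Fin m) → HubVertex m k
  | pendant : Fin m × Fin k → Fin (k - m) → HubVertex m k
  deriving Fintype

namespace HubVertex

variable {m k : ℕ}

def legNeighbor (j : Fin m × Fin k) : Option (Fin m ⊕ Fin (k - m)) → HubVertex m k
  | none => hub j.1
  | some (.inl t) => join s(j.1, t)
  | some (.inr p) => pendant j p

lemma legNeighbor_injective (j : Fin m × Fin k) : Injective (legNeighbor j) := by
  rintro (_ | _ | _) (_ | _ | _) h <;>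
    simp_all only [legNeighbor, Sym2.congr_right, reduceCtorEq, join.injEq, pendant.injEq,
      true_and]

lemma legNeighbor_ne_leg (j j' : Fin m × Fin k) (x : Option (Fin m ⊕ Fin (k - m))) :
    legNeighbor j x ≠ leg j' := by
  rcases x with _ | _ | _ <;> simp [legNeighbor]

end HubVertex

open HubVertex

def hubGraph (m k : ℕ) : SimpleGraph (HubVertex m k) :=
  SimpleGraph.fromRel fun u v => ∃ j x, u = leg j ∧ v = legNeighbor j x

namespace hubGraph

variable {m k : ℕ}

lemma adj_iff {u v : HubVertex m k} : (hubGraph m k).Adj u v ↔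
    ∃ j x, (u = leg j ∧ v = legNeighbor j x) ∨ (u = legNeighbor j x ∧ v = leg j) := by
  rw [hubGraph, fromRel_adj]
  constructor
  · rintro ⟨-, ⟨j, x, h⟩ | ⟨j, x, h⟩⟩
    exacts [⟨j, x, .inl h⟩, ⟨j, x, .inr h.symm⟩]
  · rintro ⟨j, x, ⟨rfl, rfl⟩ | ⟨rfl, rfl⟩⟩
    · exact ⟨(legNeighbor_ne_leg j j x).symm, .inl ⟨j, x, rfl, rfl⟩⟩
    · exact ⟨legNeighbor_ne_leg j j x, .inr ⟨j, x, rfl, rfl⟩⟩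

lemma neighborSet_leg (j : Fin m × Fin k) :
    (hubGraph m k).neighborSet (leg j) = Set.range (legNeighbor j) := by
  ext v
  refine ⟨fun h => ?_, fun ⟨x, hx⟩ => adj_iff.2 ⟨j, x, .inl ⟨rfl, hx.symm⟩⟩⟩
  obtain ⟨j', x, ⟨hj, rfl⟩ | ⟨hj, -⟩⟩ := adj_iff.1 h
  · exact ⟨x, by rw [leg.inj hj]⟩
  · exact absurd hj.symm (legNeighbor_ne_leg j' j x)

lemma adj_hub_leg (j : Fin m × Fin k) : (hubGraph m k).Adj (hub j.1) (leg j) :=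
  adj_iff.2 ⟨j, none, .inr ⟨rfl, rfl⟩⟩

lemma adj_leg_join (j : Fin m × Fin k) (t : Fin m) : (hubGraph m k).Adj (leg j) (join s(j.1, t)) :=
  adj_iff.2 ⟨j, some (.inl t), .inl ⟨rfl, rfl⟩⟩

lemma not_adj_leg_leg (j j' : Fin m × Fin k) : ¬ (hubGraph m k).Adj (leg j) (leg j') := by
  rintro h
  obtain ⟨j'', x, ⟨-, h⟩ | ⟨h, -⟩⟩ := adj_iff.1 h
  exacts [legNeighbor_ne_leg _ _ x h.symm, legNeighbor_ne_leg _ _ x h.symm]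

lemma exists_leg_mem {e : Sym2 (HubVertex m k)} (he : e ∈ (hubGraph m k).edgeSet) :
    ∃ j, leg j ∈ e := by
  induction e using Sym2.ind with
  | h u v =>
    obtain ⟨j, x, ⟨rfl, -⟩ | ⟨-, rfl⟩⟩ := adj_iff.1 he
    exacts [⟨j, Sym2.mem_mk_left _ _⟩, ⟨j, Sym2.mem_mk_right _ _⟩]

lemma ncard_range_leg (s : Fin m) :
    (Set.range fun i : Fin k => (leg (s, i) : HubVertex m k)).ncard = k := by
  rw [Set.ncard_range_of_injective fun i i' h => by simpa using h, Nat.card_eq_fintype_card,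
    Fintype.card_fin]

lemma neighborSet_hub_subset (s : Fin m) :
    (hubGraph m k).neighborSet (hub s) ⊆ Set.range fun i => leg (s, i) := by
  intro v h
  obtain ⟨j, x, ⟨h, -⟩ | ⟨h, rfl⟩⟩ := adj_iff.1 h
  · cases h
  · rcases x with _ | _ | _ <;> cases h
    exact ⟨j.2, rfl⟩

lemma neighborSet_join_subset (p q : Fin m) :
    (hubGraph m k).neighborSet (join s(p, q)) ⊆
      (Set.range fun i => leg (p, i)) ∪ Set.range fun i => leg (q, i) := by
  intro v h
  obtain ⟨j, x, ⟨h, -⟩ | ⟨h, rfl⟩⟩ := adj_iff.1 h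
  · cases h
  · obtain ⟨s, i⟩ := j
    rcases x with _ | ⟨t⟩ | _
    · cases h
    · have hs : s ∈ s(p, q) := join.inj h ▸ Sym2.mem_mk_left s t
      rcases Sym2.mem_iff.1 hs with rfl | rfl
      exacts [.inl ⟨i, rfl⟩, .inr ⟨i, rfl⟩]
    · cases h

lemma partDeg_leg (hm : m ≤ k) (j : Fin m × Fin k) :
    partDeg (hubGraph m k).edgeSet (leg j) = k + 1 := by
  rw [partDeg_edgeSet, neighborSet_leg, Set.ncard_range_of_injective (legNeighbor_injective j)]
  simp only [Nat.card_eq_fintype_card, Fintype.card_option, Fintype.card_sum, Fintype.card_fin]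
  omega

lemma partDeg_hub_le (s : Fin m) : partDeg (hubGraph m k).edgeSet (hub s) ≤ k := by
  calc _ = _ := partDeg_edgeSet _ _
    _ ≤ _ := Set.ncard_le_ncard (neighborSet_hub_subset s)
    _ = k := ncard_range_leg s

lemma partDeg_join_le (e : Sym2 (Fin m)) : partDeg (hubGraph m k).edgeSet (join e) ≤ 2 * k := by
  induction e using Sym2.ind with
  | h p q =>
    rw [partDeg_edgeSet]
    calc _ ≤ _ := Set.ncard_le_ncard (neighborSet_join_subset p q)
      _ ≤ _ := Set.ncard_union_le _ _
      _ = 2 * k := by rw [ncard_range_leg, ncard_range_leg, two_mul]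

theorem isKIrregularDecomposition_stars (hm : m ≤ k) :
    IsKIrregularDecomposition k (hubGraph m k) fun j => (hubGraph m k).incidenceSet (leg j) :=
  isKIrregularDecomposition_incidenceSet leg (fun _ _ => leg.inj) not_adj_leg_leg
    (fun _ => exists_leg_mem) fun j => (partDeg_leg hm j).ge

theorem mul_le_card {ι : Type*} [Fintype ι] (hm : m ≤ k) {P : ι → Set (Sym2 (HubVertex m k))}
    (hU : (⋃ i, P i) = (hubGraph m k).edgeSet) (hirr : ∀ i, IsLocallyKIrregularPart k (P i)) :
    m * k ≤ Fintype.card ι := by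
  simpa using card_le_card_of_forced_stars hU hirr (fun j => hub j.1) leg
    (fun _ _ => leg.inj) adj_hub_leg (fun j => partDeg_hub_le j.1) (partDeg_leg hm)
    fun j j' => ⟨join s(j.1, j'.1), adj_leg_join j j'.1,
      Sym2.eq_swap ▸ adj_leg_join j' j.1, partDeg_join_le _⟩

end hubGraph

/-- there is a finite graph, decomposable into locally k-irregular parts, every
such decomposition of which has at least 4k parts; hence h(k) ≥ 4k. -/
theorem stmt_14 (k : ℕ) (hk : 4 ≤ k) :
    ∃ (n : ℕ) (G : SimpleGraph (Fin n)),
      (∃ (t : ℕ) (P : Fin t → Set (Sym2 (Fin n))),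
        (⋃ i, P i) = G.edgeSet ∧
        (∀ i j, i ≠ j → Disjoint (P i) (P j)) ∧
        ∀ i, IsLocallyKIrregularPart k (P i)) ∧
      ∀ (t : ℕ) (P : Fin t → Set (Sym2 (Fin n))),
        (⋃ i, P i) = G.edgeSet →
        (∀ i j, i ≠ j → Disjoint (P i) (P j)) →
        (∀ i, IsLocallyKIrregularPart k (P i)) →
        4 * k ≤ t := by
  let ε := Fintype.equivFin (HubVertex 4 k)
  refine ⟨_, (hubGraph 4 k).map ε.toEmbedding,
    ⟨4 * k, _, ((hubGraph.isKIrregularDecomposition_stars hk).comp_equiv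
      finProdFinEquiv.symm).map ε.toEmbedding⟩, fun t P hU hD hI => ?_⟩
  obtain ⟨hU', -, hI'⟩ := IsKIrregularDecomposition.map ⟨hU, hD, hI⟩ ε.symm.toEmbedding
  simp only [map_map, Equiv.coe_toEmbedding, Equiv.symm_comp_self, map_id] at hU'
  simpa using hubGraph.mul_le_card hk hU' hI'
end
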